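/- Let n ≥ 1, let S be a stabilizer group of n-qubit signed Pauli matrices, and let ρ_S := 2^{-n} · Σ_{Q ∈ S} Q. Then the average over all signed n-qubit Pauli matrices of the squared trace satisfies: (1/(2·4^n)) · Σ_{(ε,a)} (tr(P_{ε,a} · ρ_S))² = 2^{-n}, where the sum ranges over all pairs (ε,a) with ε ∈ {1,−1} and a : Fin n → Fin 4, and P_{ε,a} := ε • (A_{a(1)} ⊗ ⋯ ⊗ A_{a(n)}) with A₀ = I₂, A₁ = X, A₂ = Y, A₃ = Z. -/

import Mathlib

open Matrix

noncomputable section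

/-- The four single-qubit Pauli matrices: `I₂`, `X`, `Y`, `Z`. -/
def pauli : Fin 4 → Matrix (Fin 2) (Fin 2) ℂ
  | 0 => 1
  | 1 => !![0, 1; 1, 0]
  | 2 => !![0, -Complex.I; Complex.I, 0]
  | 3 => !![1, 0; 0, -1]

/-- The `n`-fold Kronecker product `A_{a 0} ⊗ ⋯ ⊗ A_{a (n-1)}` of single-qubit Pauli
matrices, realized as a matrix indexed by bit strings. -/
def pauliTensor {n : ℕ} (a : Fin n → Fin 4) :
    Matrix (Fin n → Fin 2) (Fin n → Fin 2) ℂ :=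
  fun z w => ∏ i, pauli (a i) (z i) (w i)

/-- A signed `n`-qubit Pauli matrix: `ε • (A₁ ⊗ ⋯ ⊗ Aₙ)` with `ε ∈ {1, -1}`. -/
def IsSignedPauli {n : ℕ} (M : Matrix (Fin n → Fin 2) (Fin n → Fin 2) ℂ) : Prop :=
  ∃ (ε : ℂ) (a : Fin n → Fin 4), (ε = 1 ∨ ε = -1) ∧ M = ε • pauliTensor a

/-- A stabilizer group: a set of signed `n`-qubit Pauli matrices containing the identity,
closed under multiplication, pairwise commuting, not containing `-I`, of size `2^n`. -/
structure IsStabilizerGroup (n : ℕ)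
    (S : Set (Matrix (Fin n → Fin 2) (Fin n → Fin 2) ℂ)) : Prop where
  mem_pauli : ∀ M ∈ S, IsSignedPauli M
  one_mem : (1 : Matrix (Fin n → Fin 2) (Fin n → Fin 2) ℂ) ∈ S
  mul_mem : ∀ M ∈ S, ∀ N ∈ S, M * N ∈ S
  mul_comm : ∀ M ∈ S, ∀ N ∈ S, M * N = N * M
  neg_one_not_mem : -(1 : Matrix (Fin n → Fin 2) (Fin n → Fin 2) ℂ) ∉ S
  card_eq : S.ncard = 2 ^ n

/-- The stabilizer state associated to a stabilizer group: `ρ_S = 2^{-n} Σ_{Q ∈ S} Q`. -/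
def stabState {n : ℕ} (S : Set (Matrix (Fin n → Fin 2) (Fin n → Fin 2) ℂ)) :
    Matrix (Fin n → Fin 2) (Fin n → Fin 2) ℂ :=
  ((2 : ℂ) ^ n)⁻¹ • ∑ᶠ Q ∈ S, Q


/-! The Pauli tensors `P_a` form an orthogonal basis for the trace form, so `tr(P_a Q)` vanishes
for a signed Pauli matrix `Q = ±P_c` unless `a = c`, where it is `±2^n`. In a stabilizer group no
two elements share the same `c` (they would differ by a sign, and their product would be `-I`),
so `tr(P_a ρ_S) = 2^{-n} Σ_{Q ∈ S} tr(P_a Q)` has at most one nonzero term. Hence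
`Σ_a tr(P_a ρ_S)² = 4^{-n} Σ_{Q ∈ S} Σ_a tr(P_a Q)² = 4^{-n} · 2^n · 4^n = 2^n`, and the signs
`ε = ±1` only double this. -/

theorem Finset.sq_sum_of_pairwise_mul_eq_zero {α R : Type*} [CommSemiring R] {s : Finset α}
    {f : α → R} (h : (s : Set α).Pairwise fun i j => f i * f j = 0) :
    (∑ i ∈ s, f i) ^ 2 = ∑ i ∈ s, f i ^ 2 := by
  rw [sq, Finset.sum_mul_sum]
  refine Finset.sum_congr rfl fun i hi => ?_
  rw [Finset.sum_eq_single i (fun j hj hji => h hi hj hji.symm) (absurd hi), sq]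

section PiKronecker

variable {ι m R : Type*} [Fintype ι] [CommRing R]

def piKronecker (A : ι → Matrix m m R) : Matrix (ι → m) (ι → m) R :=
  fun z w => ∏ i, A i (z i) (w i)

theorem piKronecker_mul [DecidableEq ι] [Fintype m] (A B : ι → Matrix m m R) :
    piKronecker A * piKronecker B = piKronecker (A * B) := by
  ext z w
  simp [mul_apply, piKronecker, Finset.prod_univ_sum, Finset.prod_mul_distrib]

theorem piKronecker_one [DecidableEq m] : piKronecker (1 : ι → Matrix m m R) = 1 := by
  ext z w
  simp [piKronecker, one_apply, Fintype.prod_ite_zero, ← funext_iff]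

theorem trace_piKronecker [DecidableEq ι] [Fintype m] (A : ι → Matrix m m R) :
    (piKronecker A).trace = ∏ i, (A i).trace := by
  simp [trace, piKronecker, Finset.prod_univ_sum]

end PiKronecker

theorem pauli_mul_self (c : Fin 4) : pauli c * pauli c = 1 := by
  fin_cases c <;> ext i j <;> fin_cases i <;> fin_cases j <;>
    simp [pauli, mul_apply, Fin.sum_univ_two, one_apply, Complex.I_mul_I]

theorem trace_pauli_mul (c d : Fin 4) : (pauli c * pauli d).trace = if c = d then 2 else 0 := by
  fin_cases c <;> fin_cases d <;>
    simp [pauli, trace_fin_two, Complex.I_mul_I] <;> ring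

theorem pauliTensor_eq_piKronecker {n : ℕ} (a : Fin n → Fin 4) :
    pauliTensor a = piKronecker fun i => pauli (a i) :=
  rfl

theorem pauliTensor_mul_self {n : ℕ} (a : Fin n → Fin 4) :
    pauliTensor a * pauliTensor a = 1 := by
  simp only [pauliTensor_eq_piKronecker, piKronecker_mul, Pi.mul_def, pauli_mul_self]
  exact piKronecker_one

theorem trace_pauliTensor_mul {n : ℕ} (a b : Fin n → Fin 4) :
    (pauliTensor a * pauliTensor b).trace = if a = b then (2 : ℂ) ^ n else 0 := by
  simp [pauliTensor_eq_piKronecker, piKronecker_mul, trace_piKronecker, trace_pauli_mul,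
    Fintype.prod_ite_zero, ← funext_iff]

theorem IsSignedPauli.mul_self {n : ℕ} {Q : Matrix (Fin n → Fin 2) (Fin n → Fin 2) ℂ}
    (hQ : IsSignedPauli Q) : Q * Q = 1 := by
  obtain ⟨ε, c, hε, rfl⟩ := hQ
  rw [smul_mul_smul_comm, pauliTensor_mul_self]
  rcases hε with rfl | rfl <;> simp

theorem IsSignedPauli.sum_trace_pauliTensor_mul_sq {n : ℕ}
    {Q : Matrix (Fin n → Fin 2) (Fin n → Fin 2) ℂ} (hQ : IsSignedPauli Q) :
    ∑ a : Fin n → Fin 4, (pauliTensor a * Q).trace ^ 2 = (2 ^ n) ^ 2 := by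
  obtain ⟨ε, c, hε, rfl⟩ := hQ
  have hε_sq : ε ^ 2 = 1 := by rcases hε with rfl | rfl <;> norm_num
  simp [trace_pauliTensor_mul, mul_pow, hε_sq]

namespace IsStabilizerGroup

variable {n : ℕ} {S : Set (Matrix (Fin n → Fin 2) (Fin n → Fin 2) ℂ)}

theorem finite (hS : IsStabilizerGroup n S) : S.Finite :=
  Set.finite_of_ncard_ne_zero (by simp [hS.card_eq])

theorem neg_not_mem (hS : IsStabilizerGroup n S) {Q : Matrix (Fin n → Fin 2) (Fin n → Fin 2) ℂ}
    (hQ : Q ∈ S) : -Q ∉ S := fun hQ' =>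
  hS.neg_one_not_mem <| by simpa [(hS.mem_pauli Q hQ).mul_self] using hS.mul_mem Q hQ (-Q) hQ'

theorem trace_pauliTensor_mul_mul_eq_zero (hS : IsStabilizerGroup n S)
    {Q Q' : Matrix (Fin n → Fin 2) (Fin n → Fin 2) ℂ} (hQ : Q ∈ S) (hQ' : Q' ∈ S) (hne : Q ≠ Q')
    (a : Fin n → Fin 4) : (pauliTensor a * Q).trace * (pauliTensor a * Q').trace = 0 := by
  obtain ⟨ε, c, hε, rfl⟩ := hS.mem_pauli Q hQ
  obtain ⟨ε', c', hε', rfl⟩ := hS.mem_pauli Q' hQ'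
  by_cases hc : c = c'
  · subst hc
    exfalso
    rcases hε with rfl | rfl <;> rcases hε' with rfl | rfl
    · exact hne rfl
    · exact hS.neg_not_mem hQ (by simpa using hQ')
    · exact hS.neg_not_mem hQ' (by simpa using hQ)
    · exact hne rfl
  · simp only [mul_smul_comm, trace_smul, smul_eq_mul, trace_pauliTensor_mul]
    split_ifs with ha ha' <;> simp_all

theorem stabState_eq_sum (hS : IsStabilizerGroup n S) :
    stabState S = ((2 : ℂ) ^ n)⁻¹ • ∑ Q ∈ hS.finite.toFinset, Q := by
  rw [stabState, finsum_mem_eq_finite_toFinset_sum]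

theorem sum_trace_pauliTensor_mul_stabState_sq (hS : IsStabilizerGroup n S) :
    ∑ a : Fin n → Fin 4, (pauliTensor a * stabState S).trace ^ 2 = 2 ^ n := by
  set T := hS.finite.toFinset
  have hT : T.card = 2 ^ n := by rw [← hS.card_eq, Set.ncard_eq_toFinset_card S hS.finite]
  calc ∑ a : Fin n → Fin 4, (pauliTensor a * stabState S).trace ^ 2
      = ∑ a : Fin n → Fin 4, ((2 : ℂ) ^ n)⁻¹ ^ 2 * ∑ Q ∈ T, (pauliTensor a * Q).trace ^ 2 := by
        refine Fintype.sum_congr _ _ fun a => ?_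
        rw [hS.stabState_eq_sum, mul_smul_comm, trace_smul, smul_eq_mul, mul_pow, Finset.mul_sum,
          trace_sum, Finset.sq_sum_of_pairwise_mul_eq_zero]
        intro Q hQ Q' hQ' hne
        exact hS.trace_pauliTensor_mul_mul_eq_zero (by simpa [T] using hQ) (by simpa [T] using hQ')
          hne a
    _ = ((2 : ℂ) ^ n)⁻¹ ^ 2 * ∑ Q ∈ T, ∑ a : Fin n → Fin 4, (pauliTensor a * Q).trace ^ 2 := by
        rw [← Finset.mul_sum, Finset.sum_comm]
    _ = ((2 : ℂ) ^ n)⁻¹ ^ 2 * (T.card * (2 ^ n) ^ 2) := by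
        rw [Finset.sum_congr rfl fun Q hQ =>
          (hS.mem_pauli Q (by simpa [T] using hQ)).sum_trace_pauliTensor_mul_sq,
          Finset.sum_const, nsmul_eq_mul]
    _ = 2 ^ n := by
        rw [hT]
        push_cast
        field_simp

end IsStabilizerGroup

theorem stabState_norm_sq_general {n : ℕ}
    (S : Set (Matrix (Fin n → Fin 2) (Fin n → Fin 2) ℂ))
    (hS : IsStabilizerGroup n S) :
    (1 / (2 * 4 ^ n) : ℂ) *
        ∑ ε ∈ ({1, -1} : Finset ℂ), ∑ a : Fin n → Fin 4,
          ((ε • pauliTensor a) * stabState S).trace ^ 2 = ((2 : ℂ) ^ n)⁻¹ := by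
  simp only [Finset.sum_pair (show (1 : ℂ) ≠ -1 by norm_num), one_smul, neg_smul, neg_mul,
    trace_neg, neg_sq, hS.sum_trace_pauliTensor_mul_stabState_sq]
  rw [show (4 : ℂ) ^ n = 2 ^ n * 2 ^ n by rw [← mul_pow]; norm_num]
  field_simp
  ring

/-- The squared L² norm of the p-concept of a stabilizer state under the uniform distribution
on Pauli measurements: `(1/(2·4^n)) Σ_{(ε,a)} (tr(P_{ε,a} ρ_S))² = 2^{-n}`. -/
theorem stabState_norm_sq {n : ℕ} (hn : 1 ≤ n)
    (S : Set (Matrix (Fin n → Fin 2) (Fin n → Fin 2) ℂ))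
    (hS : IsStabilizerGroup n S) :
    (1 / (2 * 4 ^ n) : ℂ) *
        ∑ ε ∈ ({1, -1} : Finset ℂ), ∑ a : Fin n → Fin 4,
          ((ε • pauliTensor a) * stabState S).trace ^ 2 = ((2 : ℂ) ^ n)⁻¹ :=
  stabState_norm_sq_general S hS
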